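/- arXiv:2006.16888 — 4 statements merged into one kernel-verified Lean document; each statement's English description precedes it below -/
import Mathlib

section
/- Let n ≥ 1, let D = diag(d₁,…,dₙ) with all dᵢ > 0, let L^D be a real symmetric n×n matrix with an orthonormal eigenbasis u₁,…,uₙ ∈ ℝⁿ and corresponding eigenvalues λ₁,…,λₙ, let γ > 0 with λ_α ≠ γ/4 for every α, and let δP : ℝ → ℝⁿ be continuous. For each α set Γ_α ∈ ℂ with Γ_α² = γ² − 4λ_α γ, f_α(t) = (D^{−1/2} δP(t))ᵀ u_α, and c_α(t) = γ e^{−(γ+Γ_α)t/2} ∫₀ᵗ e^{Γ_α t₁} ( ∫₀^{t₁} f_α(t₂) e^{(γ−Γ_α)t₂/2} dt₂ ) dt₁. Then δφ(t) = Σ_α c_α(t) u_α (a ℂⁿ-valued function) satisfies γ⁻¹ δφ̈(t) + δφ̇(t) = D^{−1/2} δP(t) − L^D δφ(t) for all t ≥ 0, with δφ(0) = 0 and δφ̇(0) = 0. -/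
/-!
Write `V r h (t) = e^{rt} ∫₀ᵗ e^{-rs} h(s) ds` for the solution of `y' = r y + h`, `y(0) = 0`.
With `r₁ = -(γ + Γ)/2` and `r₂ = (Γ - γ)/2`, the roots of `r² + γ r + λγ`, the mode coefficient
is `c = γ · V r₁ (V r₂ f)`, so `(d/dt - r₁)(d/dt - r₂) (c/γ) = f`, which is the scalar equation
`γ⁻¹ c'' + c' = f - λ c` with zero initial data. Summing the modes, `L^D` acts on each one through
its eigenvalue, and completeness of the orthonormal basis `u_α` turns `Σ_α f_α u_α` back into
`D^{-1/2} δP`.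
-/

open MeasureTheory intervalIntegral Complex Matrix

theorem hasDerivAt_cexp_mul_ofReal (a : ℂ) (t : ℝ) :
    HasDerivAt (fun s : ℝ => cexp (a * s)) (a * cexp (a * t)) t := by
  simpa [mul_comm] using ((hasDerivAt_id t).ofReal_comp.const_mul a).cexp

noncomputable def variationOfConstants (r : ℂ) (h : ℝ → ℂ) (t : ℝ) : ℂ :=
  cexp (r * t) * ∫ s in (0 : ℝ)..t, cexp (-r * s) * h s

section VariationOfConstants

variable {r : ℂ} {h : ℝ → ℂ}

@[simp]
theorem variationOfConstants_zero : variationOfConstants r h 0 = 0 := by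
  simp [variationOfConstants]

theorem hasDerivAt_variationOfConstants (hh : Continuous h) (t : ℝ) :
    HasDerivAt (variationOfConstants r h) (r * variationOfConstants r h t + h t) t := by
  have hI : HasDerivAt (fun t => ∫ s in (0 : ℝ)..t, cexp (-r * s) * h s)
      (cexp (-r * t) * h t) t :=
    (Continuous.integral_hasStrictDerivAt (by fun_prop) 0 t).hasDerivAt
  have hinv : cexp (r * t) * cexp (-r * t) = 1 := by
    rw [← Complex.exp_add]; simp
  refine ((hasDerivAt_cexp_mul_ofReal r t).mul hI).congr_deriv ?_
  unfold variationOfConstants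
  linear_combination h t * hinv

theorem differentiable_variationOfConstants (hh : Continuous h) :
    Differentiable ℝ (variationOfConstants r h) :=
  fun t => (hasDerivAt_variationOfConstants hh t).differentiableAt

theorem deriv_variationOfConstants (hh : Continuous h) :
    deriv (variationOfConstants r h) = fun t => r * variationOfConstants r h t + h t :=
  funext fun t => (hasDerivAt_variationOfConstants hh t).deriv

end VariationOfConstants

theorem deriv_deriv_variationOfConstants_variationOfConstants {r₁ r₂ : ℂ} {f : ℝ → ℂ}
    (hf : Continuous f) (t : ℝ) :
    deriv (deriv (variationOfConstants r₁ (variationOfConstants r₂ f))) t =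
      (r₁ + r₂) * deriv (variationOfConstants r₁ (variationOfConstants r₂ f)) t
        - r₁ * r₂ * variationOfConstants r₁ (variationOfConstants r₂ f) t + f t := by
  have hg := (differentiable_variationOfConstants (r := r₂) hf).continuous
  rw [deriv_variationOfConstants hg,
    (((hasDerivAt_variationOfConstants hg t).const_mul r₁).fun_add
      (hasDerivAt_variationOfConstants hf t)).deriv]
  ring

theorem modeFormula_eq_variationOfConstants (γ Γ : ℂ) (f : ℝ → ℂ) (t : ℝ) :
    γ * cexp (-(γ + Γ) * t / 2) *
        (∫ t₁ in (0 : ℝ)..t, cexp (Γ * t₁) * ∫ t₂ in (0 : ℝ)..t₁, f t₂ * cexp ((γ - Γ) * t₂ / 2)) =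
      γ * variationOfConstants (-(γ + Γ) / 2) (variationOfConstants ((Γ - γ) / 2) f) t := by
  simp only [variationOfConstants, mul_assoc]
  congr 2
  · ring_nf
  · refine integral_congr fun t₁ _ => ?_
    simp only [← mul_assoc, ← Complex.exp_add]
    congr 1
    · ring_nf
    · refine integral_congr fun t₂ _ => ?_
      rw [mul_comm]
      congr 2
      ring

theorem dampedMode_solution {γ lam Γ : ℂ} (hγ : γ ≠ 0) (hΓ : Γ ^ 2 = γ ^ 2 - 4 * lam * γ)
    {f : ℝ → ℂ} (hf : Continuous f) {c : ℝ → ℂ}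
    (hc : c = fun t =>
      γ * variationOfConstants (-(γ + Γ) / 2) (variationOfConstants ((Γ - γ) / 2) f) t) :
    Differentiable ℝ c ∧ Differentiable ℝ (deriv c) ∧
      (∀ t, γ⁻¹ * deriv (deriv c) t + deriv c t = f t - lam * c t) ∧ c 0 = 0 ∧ deriv c 0 = 0 := by
  set y := variationOfConstants (-(γ + Γ) / 2) (variationOfConstants ((Γ - γ) / 2) f)
  have hg := (differentiable_variationOfConstants (r := (Γ - γ) / 2) hf).continuous
  have hy : Differentiable ℝ y := differentiable_variationOfConstants hg
  have hy' : Differentiable ℝ (deriv y) := by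
    rw [deriv_variationOfConstants hg]
    exact ((hy.const_mul _).add (differentiable_variationOfConstants hf))
  have hc' : deriv c = fun t => γ * deriv y t := by
    rw [hc]; exact deriv_const_mul_field' _
  have hc'' : deriv (deriv c) = fun t => γ * deriv (deriv y) t := by
    rw [hc']; exact deriv_const_mul_field' _
  have hy'' : ∀ t, deriv (deriv y) t =
      (-(γ + Γ) / 2 + (Γ - γ) / 2) * deriv y t - -(γ + Γ) / 2 * ((Γ - γ) / 2) * y t + f t :=
    deriv_deriv_variationOfConstants_variationOfConstants hf
  subst hc
  refine ⟨hy.const_mul _, hc' ▸ hy'.const_mul _, fun t => ?_, by simp [y], ?_⟩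
  · rw [hc'', hc']
    simp only [hy'']
    rw [inv_mul_cancel_left₀ hγ]
    linear_combination (y t / 4) * hΓ
  · rw [hc', deriv_variationOfConstants hg]
    simp

theorem sum_mul_sum_of_orthonormal {ι : Type*} [Fintype ι] [DecidableEq ι] {u : ι → ι → ℝ}
    (horth : ∀ α β, ∑ i, u α i * u β i = if α = β then 1 else 0) (v : ι → ℝ) (i : ι) :
    ∑ α, (∑ j, v j * u α j) * u α i = v i := by
  set U := of u
  have hU : U * U.transpose = 1 := by
    ext α β
    simpa [U, mul_apply, one_apply] using horth α β
  have hcol : ∀ j, ∑ α, u α j * u α i = if j = i then 1 else 0 := fun j => by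
    simpa [U, mul_apply, one_apply] using
      congrArg (fun M => M j i) (mul_eq_one_comm.mp hU)
  calc ∑ α, (∑ j, v j * u α j) * u α i = ∑ j, v j * ∑ α, u α j * u α i := by
        simp only [Finset.sum_mul, Finset.mul_sum, mul_assoc]
        exact Finset.sum_comm
    _ = v i := by simp [hcol]

theorem map_ofReal_mulVec_sum_eigenvectors {ι : Type*} [Fintype ι] {L : Matrix ι ι ℝ}
    {u : ι → ι → ℝ} {lam : ι → ℝ} (heig : ∀ α, L *ᵥ u α = lam α • u α) (a : ι → ℂ) (i : ι) :
    (L.map ((↑) : ℝ → ℂ) *ᵥ fun j => ∑ α, a α * u α j) i = ∑ α, lam α * a α * u α i := by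
  have hcomplex : ∀ α, L.map ((↑) : ℝ → ℂ) *ᵥ (fun j => (u α j : ℂ)) =
      fun j => (lam α * u α j : ℂ) := by
    intro α
    funext j
    have := RingHom.map_mulVec Complex.ofRealHom L (u α) j
    rw [heig] at this
    exact this.symm.trans (by simp)
  have hvec : (fun j => ∑ α, a α * (u α j : ℂ)) = ∑ α, a α • fun j => (u α j : ℂ) := by
    ext j; simp [Finset.sum_apply]
  rw [hvec, mulVec_sum]
  simp only [mulVec_smul, hcomplex, Finset.sum_apply, Pi.smul_apply, smul_eq_mul]
  exact Finset.sum_congr rfl fun α _ => by ring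

theorem deriv_sum_mul_const {ι : Type*} [Fintype ι] {c : ι → ℝ → ℂ}
    (hc : ∀ α, Differentiable ℝ (c α)) (a : ι → ℂ) :
    deriv (fun t => ∑ α, c α t * a α) = fun t => ∑ α, deriv (c α) t * a α :=
  funext fun t => (HasDerivAt.fun_sum fun α _ => (hc α t).hasDerivAt.mul_const (a α)).deriv

theorem prop1_general_solution_general
    (n : ℕ) (d : Fin n → ℝ)
    (L : Matrix (Fin n) (Fin n) ℝ)
    (u : Fin n → Fin n → ℝ) (lam : Fin n → ℝ)
    (heig : ∀ α, L.mulVec (u α) = lam α • u α)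
    (horth : ∀ α β, (∑ i, u α i * u β i) = if α = β then (1 : ℝ) else 0)
    (γ : ℝ) (hγ : 0 < γ)
    (δP : ℝ → Fin n → ℝ) (hδP : Continuous δP)
    (Γ : Fin n → ℂ)
    (hΓ : ∀ α, (Γ α) ^ 2 = (γ : ℂ) ^ 2 - 4 * (lam α : ℂ) * (γ : ℂ))
    (f : Fin n → ℝ → ℝ)
    (hf : ∀ α t, f α t = ∑ i, δP t i / Real.sqrt (d i) * u α i)
    (c : Fin n → ℝ → ℂ)
    (hc : ∀ α (t : ℝ), c α t =
      (γ : ℂ) * Complex.exp (-((γ : ℂ) + Γ α) * (t : ℂ) / 2) *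
        ∫ t₁ in (0 : ℝ)..t, Complex.exp (Γ α * (t₁ : ℂ)) *
          ∫ t₂ in (0 : ℝ)..t₁, (f α t₂ : ℂ) * Complex.exp (((γ : ℂ) - Γ α) * (t₂ : ℂ) / 2))
    (δφ : ℝ → Fin n → ℂ)
    (hδφ : ∀ (t : ℝ) (i : Fin n), δφ t i = ∑ α, c α t * (u α i : ℂ)) :
    (∀ t : ℝ, 0 ≤ t → ∀ i : Fin n,
      (γ : ℂ)⁻¹ * deriv (deriv (fun s => δφ s i)) t + deriv (fun s => δφ s i) t
        = ((δP t i / Real.sqrt (d i) : ℝ) : ℂ)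
          - ((L.map ((↑) : ℝ → ℂ)).mulVec (δφ t)) i) ∧
    (∀ i, δφ 0 i = 0) ∧
    (∀ i, deriv (fun s => δφ s i) 0 = 0) := by
  have hfc : ∀ α, Continuous fun t => (f α t : ℂ) := fun α => by
    simp only [hf]; fun_prop
  choose hc₁ hc₂ hode hc0 hc'0 using fun α =>
    dampedMode_solution (by exact_mod_cast hγ.ne') (hΓ α) (hfc α)
      (funext fun t => (hc α t).trans (modeFormula_eq_variationOfConstants _ _ _ t))
  have hφ : ∀ i, (fun s => δφ s i) = fun s => ∑ α, c α s * (u α i : ℂ) :=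
    fun i => funext fun s => hδφ s i
  have hφ' : ∀ i, deriv (fun s => δφ s i) = fun s => ∑ α, deriv (c α) s * (u α i : ℂ) :=
    fun i => by rw [hφ, deriv_sum_mul_const hc₁]
  have hφ'' : ∀ i, deriv (deriv (fun s => δφ s i)) =
      fun s => ∑ α, deriv (deriv (c α)) s * (u α i : ℂ) :=
    fun i => by rw [hφ', deriv_sum_mul_const hc₂]
  refine ⟨fun t _ i => ?_, fun i => by simp [hδφ, hc0], fun i => by simp [hφ', hc'0]⟩
  have hforcing : ∑ α, (f α t : ℂ) * (u α i : ℂ) = ((δP t i / Real.sqrt (d i) : ℝ) : ℂ) := by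
    simp only [hf, ← sum_mul_sum_of_orthonormal horth (fun j => δP t j / Real.sqrt (d j)) i]
    push_cast; rfl
  calc (γ : ℂ)⁻¹ * deriv (deriv (fun s => δφ s i)) t + deriv (fun s => δφ s i) t
      = ∑ α, ((γ : ℂ)⁻¹ * deriv (deriv (c α)) t + deriv (c α) t) * (u α i : ℂ) := by
        rw [hφ'', hφ']
        simp only [Finset.mul_sum, add_mul, Finset.sum_add_distrib, mul_assoc]
    _ = ∑ α, (f α t : ℂ) * (u α i : ℂ) - ∑ α, (lam α : ℂ) * c α t * (u α i : ℂ) := by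
        simp only [hode, sub_mul, mul_assoc, Finset.sum_sub_distrib]
    _ = _ := by
        rw [hforcing, funext (hδφ t), map_ofReal_mulVec_sum_eigenvectors heig]

/-- Proposition 1 of the paper.
With `L^D` a real symmetric `n×n` matrix with orthonormal eigenbasis `u_α` and
eigenvalues `λ_α`, constant damping-to-inertia ratio `γ > 0` (`λ_α ≠ γ/4`),
continuous disturbance `δP`, per-mode forcing `f_α = (D^{-1/2} δP)ᵀ u_α`, and
mode coefficients `c_α` given by the iterated-integral formula, the function
`δφ(t) = Σ_α c_α(t) u_α` (ℂⁿ-valued) solves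
`γ⁻¹ δφ̈ + δφ̇ = D^{-1/2} δP − L^D δφ` for `t ≥ 0`, with `δφ(0) = 0`, `δφ̇(0) = 0`. -/
theorem prop1_general_solution
    (n : ℕ) (hn : 1 ≤ n) (d : Fin n → ℝ) (hd : ∀ i, 0 < d i)
    (L : Matrix (Fin n) (Fin n) ℝ) (hLsymm : L.IsSymm)
    (u : Fin n → Fin n → ℝ) (lam : Fin n → ℝ)
    (heig : ∀ α, L.mulVec (u α) = lam α • u α)
    (horth : ∀ α β, (∑ i, u α i * u β i) = if α = β then (1 : ℝ) else 0)
    (γ : ℝ) (hγ : 0 < γ) (hlam : ∀ α, lam α ≠ γ / 4)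
    (δP : ℝ → Fin n → ℝ) (hδP : Continuous δP)
    (Γ : Fin n → ℂ)
    (hΓ : ∀ α, (Γ α) ^ 2 = (γ : ℂ) ^ 2 - 4 * (lam α : ℂ) * (γ : ℂ))
    (f : Fin n → ℝ → ℝ)
    (hf : ∀ α t, f α t = ∑ i, δP t i / Real.sqrt (d i) * u α i)
    (c : Fin n → ℝ → ℂ)
    (hc : ∀ α (t : ℝ), c α t =
      (γ : ℂ) * Complex.exp (-((γ : ℂ) + Γ α) * (t : ℂ) / 2) *
        ∫ t₁ in (0 : ℝ)..t, Complex.exp (Γ α * (t₁ : ℂ)) *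
          ∫ t₂ in (0 : ℝ)..t₁, (f α t₂ : ℂ) * Complex.exp (((γ : ℂ) - Γ α) * (t₂ : ℂ) / 2))
    (δφ : ℝ → Fin n → ℂ)
    (hδφ : ∀ (t : ℝ) (i : Fin n), δφ t i = ∑ α, c α t * (u α i : ℂ)) :
    (∀ t : ℝ, 0 ≤ t → ∀ i : Fin n,
      (γ : ℂ)⁻¹ * deriv (deriv (fun s => δφ s i)) t + deriv (fun s => δφ s i) t
        = ((δP t i / Real.sqrt (d i) : ℝ) : ℂ)
          - ((L.map ((↑) : ℝ → ℂ)).mulVec (δφ t)) i) ∧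
    (∀ i, δφ 0 i = 0) ∧
    (∀ i, deriv (fun s => δφ s i) 0 = 0) :=
  prop1_general_solution_general n d L u lam heig horth γ hγ δP hδP Γ hΓ f hf c hc δφ hδφ
end

section
/- Let n ≥ 2, γ > 0, τ₀ > 0, and for each α ∈ {2,…,n} let λ_α > γ/4, Ω_α = √(4λ_α γ − γ²), g_α(t) = (2γ/Ω_α) e^{−γt/2} sin(Ω_α t / 2), and σ_α² ≥ 0. Then lim_{T→∞} T⁻¹ Σ_{α=2}^{n} σ_α² ∫₀ᵀ ( ∫₀ᵗ ∫₀ᵗ ġ_α(t−s) ġ_α(t−s′) e^{−|s−s′|/τ₀} ds ds′ ) dt = Σ_{α=2}^{n} σ_α² / (λ_α τ₀ + 1 + γ⁻¹ τ₀⁻¹). -/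
open MeasureTheory intervalIntegral Filter

namespace AvgEffort

lemma cexp_tendsto_zero {c : ℂ} (hc : c.re < 0) :
    Tendsto (fun t : ℝ => Complex.exp (c * t)) atTop (nhds 0) := by
  rw [tendsto_zero_iff_norm_tendsto_zero]
  have h : (fun t : ℝ => ‖Complex.exp (c * t)‖) = fun t : ℝ => Real.exp (c.re * t) := by
    funext t
    rw [Complex.norm_exp]
    norm_num [Complex.mul_re]
  rw [h]
  exact Real.tendsto_exp_atBot.comp (tendsto_id.const_mul_atTop_of_neg hc)

lemma tendsto_average {f : ℝ → ℝ} {c : ℝ}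
    (hf : ∀ T : ℝ, IntervalIntegrable f volume 0 T)
    (h : Tendsto f atTop (nhds c)) :
    Tendsto (fun T : ℝ => T⁻¹ * ∫ t in (0:ℝ)..T, f t) atTop (nhds c) := by
  rw [Metric.tendsto_atTop]
  intro ε hε
  have h3 : 0 < ε / 3 := by linarith
  obtain ⟨M₀, hM₀⟩ := (Metric.tendsto_atTop.mp h) (ε/3) h3
  set M := max M₀ 0 with hM
  have hM0 : 0 ≤ M := le_max_right _ _
  have hbound : ∀ t, M ≤ t → |f t - c| ≤ ε/3 := by
    intro t ht
    have := hM₀ t (le_trans (le_max_left _ _) ht)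
    rw [Real.dist_eq] at this
    linarith
  set A := |∫ t in (0:ℝ)..M, (f t - c)| with hA
  have hA0 : 0 ≤ A := abs_nonneg _
  refine ⟨max (max M 1) (3 * A / ε + 1), fun T hT => ?_⟩
  have hTM : M ≤ T := le_trans (le_trans (le_max_left _ _) (le_max_left _ _)) hT
  have hT1 : (1:ℝ) ≤ T := le_trans (le_trans (le_max_right _ _) (le_max_left _ _)) hT
  have hT0 : 0 < T := by linarith
  have hTA : 3 * A / ε + 1 ≤ T := le_trans (le_max_right _ _) hT
  have hint : ∀ a b : ℝ, IntervalIntegrable (fun t => f t - c) volume a b := by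
    intro a b
    exact ((hf a).symm.trans (hf b)).sub intervalIntegrable_const
  have key : (∫ t in (0:ℝ)..T, f t) - T * c = ∫ t in (0:ℝ)..T, (f t - c) := by
    rw [intervalIntegral.integral_sub (hf T) intervalIntegrable_const,
      intervalIntegral.integral_const]
    simp [smul_eq_mul]
  have split : (∫ t in (0:ℝ)..T, (f t - c)) =
      (∫ t in (0:ℝ)..M, (f t - c)) + ∫ t in M..T, (f t - c) :=
    (intervalIntegral.integral_add_adjacent_intervals (hint 0 M) (hint M T)).symm
  have htail : |∫ t in M..T, (f t - c)| ≤ ε/3 * |T - M| := by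
    have := intervalIntegral.norm_integral_le_of_norm_le_const
      (f := fun t => f t - c) (a := M) (b := T) (C := ε/3) ?_
    · simpa using this
    · intro x hx
      rw [Set.uIoc_of_le hTM] at hx
      simpa using hbound x (le_of_lt hx.1)
  rw [Real.dist_eq]
  have heq : T⁻¹ * (∫ t in (0:ℝ)..T, f t) - c = T⁻¹ * ((∫ t in (0:ℝ)..T, f t) - T * c) := by
    field_simp
  rw [heq, key, split]
  have habs : |T⁻¹ * ((∫ t in (0:ℝ)..M, (f t - c)) + ∫ t in M..T, (f t - c))|
      ≤ T⁻¹ * (A + ε/3 * (T - M)) := by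
    rw [abs_mul, abs_of_pos (inv_pos.mpr hT0)]
    apply mul_le_mul_of_nonneg_left _ (le_of_lt (inv_pos.mpr hT0))
    refine le_trans (abs_add_le _ _) ?_
    have habs2 : |T - M| = T - M := abs_of_nonneg (by linarith)
    rw [habs2] at htail
    exact add_le_add le_rfl htail
  have hlt : T⁻¹ * A < ε/3 := by
    have h2 : 3 * A < T * ε := by
      have h1 : 3 * A / ε < T := lt_of_lt_of_le (by linarith) hTA
      exact (div_lt_iff₀ hε).mp h1
    rw [inv_mul_eq_div, div_lt_iff₀ hT0]
    linarith
  have htail2 : T⁻¹ * (ε/3 * (T - M)) ≤ ε/3 := by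
    have h1 : T⁻¹ * (ε/3 * (T - M)) ≤ T⁻¹ * (ε/3 * T) := by
      apply mul_le_mul_of_nonneg_left _ (le_of_lt (inv_pos.mpr hT0))
      nlinarith
    have h2 : T⁻¹ * (ε/3 * T) = ε/3 := by field_simp
    linarith
  calc |T⁻¹ * ((∫ t in (0:ℝ)..M, (f t - c)) + ∫ t in M..T, (f t - c))|
      ≤ T⁻¹ * (A + ε/3 * (T - M)) := habs
    _ = T⁻¹ * A + T⁻¹ * (ε/3 * (T - M)) := by ring
    _ < ε := by linarith

/-- Inner integral closed form container. -/
noncomputable def Inn (a : ℝ) (q : ℂ) (t u : ℝ) : ℂ :=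
  (Complex.exp ((q+a)*u) - 1)/(q+a) * Complex.exp (-(a:ℂ)*u)
  + (Complex.exp ((q-a)*t) - Complex.exp ((q-a)*u))/(q-a) * Complex.exp ((a:ℂ)*u)

/-- Outer integral closed form container. -/
noncomputable def Phi (a : ℝ) (p q : ℂ) (t : ℝ) : ℂ :=
  (1/(q+a) - 1/(q-a)) * ((Complex.exp ((p+q)*t) - 1)/(p+q))
  - (Complex.exp ((p-a)*t) - 1)/(q+a)/(p-a)
  + (Complex.exp ((p+q)*t) - Complex.exp ((q-a)*t))/(q-a)/(p+a)

/-- Limit of `Phi` as `t → ∞`. -/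
noncomputable def Lam (a : ℝ) (p q : ℂ) : ℂ :=
  (1/(q+a) - 1/(q-a)) * (-1/(p+q)) + 1/(q+a)/(p-a)

lemma Inn_continuous (a : ℝ) (q : ℂ) (t : ℝ) : Continuous (Inn a q t) := by
  have hc : ∀ c : ℂ, Continuous (fun u : ℝ => Complex.exp (c * u)) :=
    fun c => Complex.continuous_exp.comp (continuous_const.mul Complex.continuous_ofReal)
  exact (((hc _).sub continuous_const).div_const _ |>.mul (hc _)).add
    ((continuous_const.sub (hc _)).div_const _ |>.mul (hc _))

lemma inner_integral (a : ℝ) (q : ℂ) (hq1 : q + (a:ℂ) ≠ 0) (hq2 : q - (a:ℂ) ≠ 0)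
    {u t : ℝ} (hu : 0 ≤ u) (hut : u ≤ t) :
    (∫ v in (0:ℝ)..t, Complex.exp (q * v) * Complex.exp (-(a:ℂ) * |u - v|))
      = Inn a q t u := by
  unfold Inn
  have hcont : Continuous (fun v : ℝ => Complex.exp (q * v) * Complex.exp (-(a:ℂ) * |u - v|)) := by
    apply Continuous.mul
    · exact Complex.continuous_exp.comp (continuous_const.mul Complex.continuous_ofReal)
    · exact Complex.continuous_exp.comp
        (continuous_const.mul (Complex.continuous_ofReal.comp
          ((continuous_const.sub continuous_id).abs)))
  rw [← intervalIntegral.integral_add_adjacent_intervals (a := 0) (b := u) (c := t)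
    (hcont.intervalIntegrable 0 u) (hcont.intervalIntegrable u t)]
  have h1 : (∫ v in (0:ℝ)..u, Complex.exp (q * v) * Complex.exp (-(a:ℂ) * |u - v|))
      = Complex.exp (-(a:ℂ)*u) * ∫ v in (0:ℝ)..u, Complex.exp ((q+a) * v) := by
    rw [← intervalIntegral.integral_const_mul]
    apply intervalIntegral.integral_congr
    intro v hv
    rw [Set.uIcc_of_le hu] at hv
    have habs : |u - v| = u - v := abs_of_nonneg (by linarith [hv.2])
    simp only [habs]
    rw [← Complex.exp_add, ← Complex.exp_add]
    congr 1
    push_cast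
    ring
  have h2 : (∫ v in u..t, Complex.exp (q * v) * Complex.exp (-(a:ℂ) * |u - v|))
      = Complex.exp ((a:ℂ)*u) * ∫ v in u..t, Complex.exp ((q-a) * v) := by
    rw [← intervalIntegral.integral_const_mul]
    apply intervalIntegral.integral_congr
    intro v hv
    rw [Set.uIcc_of_le hut] at hv
    have habs : |u - v| = v - u := by
      rw [abs_sub_comm]; exact abs_of_nonneg (by linarith [hv.1])
    simp only [habs]
    rw [← Complex.exp_add, ← Complex.exp_add]
    congr 1
    push_cast
    ring
  rw [h1, h2, integral_exp_mul_complex hq1, integral_exp_mul_complex hq2]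
  push_cast
  simp only [mul_zero, Complex.exp_zero]
  ring

set_option maxHeartbeats 2000000 in
lemma outer_integral (a : ℝ) (p q : ℂ)
    (hq1 : q + (a:ℂ) ≠ 0) (hq2 : q - (a:ℂ) ≠ 0) (hpq : p + q ≠ 0)
    (hpa1 : p + (a:ℂ) ≠ 0) (hpa2 : p - (a:ℂ) ≠ 0) (t : ℝ) :
    (∫ u in (0:ℝ)..t, Complex.exp (p * u) * Inn a q t u) = Phi a p q t := by
  unfold Inn Phi
  have hfun : ∀ u : ℝ, Complex.exp (p * u) *
        ((Complex.exp ((q+a)*u) - 1)/(q+a) * Complex.exp (-(a:ℂ)*u)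
          + (Complex.exp ((q-a)*t) - Complex.exp ((q-a)*u))/(q-a) * Complex.exp ((a:ℂ)*u))
      = (1/(q+a) - 1/(q-a)) * Complex.exp ((p+q)*u)
        + (-1/(q+a)) * Complex.exp ((p-a)*u)
        + (Complex.exp ((q-a)*t)/(q-a)) * Complex.exp ((p+a)*u) := by
    intro u
    have hE : ∀ x y : ℂ, Complex.exp ((x+y)*(u:ℂ)) = Complex.exp (x*u) * Complex.exp (y*u) := by
      intro x y; rw [← Complex.exp_add]; ring_nf
    have hEn : Complex.exp (-(a:ℂ)*(u:ℂ)) = (Complex.exp ((a:ℂ)*u))⁻¹ := by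
      rw [← Complex.exp_neg]; ring_nf
    have hsub : ∀ x y : ℂ, Complex.exp ((x-y)*(u:ℂ)) = Complex.exp (x*u) * (Complex.exp (y*u))⁻¹ := by
      intro x y
      rw [← Complex.exp_neg, ← Complex.exp_add]
      congr 1; ring
    rw [hE (q) (a), hE p q, hsub q a, hsub p a, hE p a, hEn]
    have h1 := Complex.exp_ne_zero ((a:ℂ)*u)
    field_simp
    ring
  rw [intervalIntegral.integral_congr (g :=
      fun u : ℝ => (1/(q+a) - 1/(q-a)) * Complex.exp ((p+q)*u)
        + (-1/(q+a)) * Complex.exp ((p-a)*u)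
        + (Complex.exp ((q-a)*t)/(q-a)) * Complex.exp ((p+a)*u)) (fun u _ => hfun u)]
  have hc : ∀ c : ℂ, Continuous (fun u : ℝ => Complex.exp (c * u)) :=
    fun c => Complex.continuous_exp.comp (continuous_const.mul Complex.continuous_ofReal)
  rw [intervalIntegral.integral_add, intervalIntegral.integral_add]
  · rw [intervalIntegral.integral_const_mul, intervalIntegral.integral_const_mul,
      intervalIntegral.integral_const_mul,
      integral_exp_mul_complex hpq, integral_exp_mul_complex hpa2, integral_exp_mul_complex hpa1]
    simp only [Complex.ofReal_zero, mul_zero, Complex.exp_zero]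
    have hE2 : Complex.exp ((q-a)*t) * Complex.exp ((p+a)*t) = Complex.exp ((p+q)*t) := by
      rw [← Complex.exp_add]; congr 1; ring
    rw [← hE2]
    ring
  · exact ((continuous_const.mul (hc (p+q))).intervalIntegrable 0 t)
  · exact ((continuous_const.mul (hc (p-a))).intervalIntegrable 0 t)
  · exact (((continuous_const.mul (hc (p+q))).add
      (continuous_const.mul (hc (p-a)))).intervalIntegrable 0 t)
  · exact ((continuous_const.mul (hc (p+a))).intervalIntegrable 0 t)

lemma Phi_tendsto (a : ℝ) (p q : ℂ) (h1 : (p+q).re < 0) (h2 : (p-(a:ℂ)).re < 0)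
    (h3 : (q-(a:ℂ)).re < 0) :
    Tendsto (Phi a p q) atTop (nhds (Lam a p q)) := by
  have tA := cexp_tendsto_zero h1
  have tB := cexp_tendsto_zero h2
  have tC := cexp_tendsto_zero h3
  have h : Tendsto (Phi a p q) atTop (nhds
      ((1/(q+(a:ℂ)) - 1/(q-(a:ℂ))) * (((0:ℂ) - 1)/(p+q))
        - ((0:ℂ) - 1)/(q+(a:ℂ))/(p-(a:ℂ))
        + ((0:ℂ) - 0)/(q-(a:ℂ))/(p+(a:ℂ)))) := by
    unfold Phi
    exact ((((tA.sub tendsto_const_nhds).div_const _).const_mul _).sub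
      (((tB.sub tendsto_const_nhds).div_const _).div_const _)).add
      (((tA.sub tC).div_const _).div_const _)
  convert h using 2
  unfold Lam
  ring

lemma Phi_continuous (a : ℝ) (p q : ℂ) : Continuous (Phi a p q) := by
  have hc : ∀ c : ℂ, Continuous (fun u : ℝ => Complex.exp (c * u)) :=
    fun c => Complex.continuous_exp.comp (continuous_const.mul Complex.continuous_ofReal)
  unfold Phi
  exact ((continuous_const.mul (((hc _).sub continuous_const).div_const _)).sub
    ((((hc _).sub continuous_const).div_const _).div_const _)).add
    ((((hc _).sub (hc _)).div_const _).div_const _)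

set_option maxHeartbeats 4000000 in
/-- The per-mode limit. -/
lemma mode_limit (γ τ₀ lamα Ωα : ℝ) (hγ : 0 < γ) (hτ₀ : 0 < τ₀) (hlam : γ/4 < lamα)
    (hΩ : Ωα = Real.sqrt (4*lamα*γ - γ^2)) (gα : ℝ → ℝ)
    (hg : ∀ t : ℝ, gα t = 2*γ/Ωα * Real.exp (-γ*t/2) * Real.sin (Ωα*t/2)) :
    Tendsto (fun T : ℝ => T⁻¹ * ∫ t in (0:ℝ)..T, ∫ s in (0:ℝ)..t, ∫ s' in (0:ℝ)..t,
        deriv gα (t-s) * deriv gα (t-s') * Real.exp (-|s-s'|/τ₀)) atTop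
      (nhds (1 / (lamα*τ₀ + 1 + γ⁻¹*τ₀⁻¹))) := by
  -- basic positivity and the frequency identity
  have hpos : 0 < 4*lamα*γ - γ^2 := by nlinarith
  have hΩpos : 0 < Ωα := by rw [hΩ]; exact Real.sqrt_pos.mpr hpos
  have hΩ2 : Ωα^2 = 4*lamα*γ - γ^2 := by rw [hΩ]; exact Real.sq_sqrt hpos.le
  set a : ℝ := τ₀⁻¹ with ha_def
  have ha : 0 < a := inv_pos.mpr hτ₀
  set z : ℂ := (↑(-γ/2) : ℂ) + ↑(Ωα/2)*Complex.I with hz_def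
  set w : ℂ := (↑(-γ/2) : ℂ) - ↑(Ωα/2)*Complex.I with hw_def
  set Cc : ℂ := ↑(γ/Ωα) * (-Complex.I) with hC_def
  have hΩhalf : Ωα/2 ≠ 0 := by positivity
  have him_ne : ∀ x : ℂ, x.im ≠ 0 → x ≠ 0 := fun x hx h => hx (by rw [h]; simp)
  have hza1 : z + (a:ℂ) ≠ 0 := him_ne _ (by simp [hz_def]; exact hΩpos.ne')
  have hza2 : z - (a:ℂ) ≠ 0 := him_ne _ (by simp [hz_def]; exact hΩpos.ne')
  have hwa1 : w + (a:ℂ) ≠ 0 := him_ne _ (by simp [hw_def]; exact hΩpos.ne')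
  have hwa2 : w - (a:ℂ) ≠ 0 := him_ne _ (by simp [hw_def]; exact hΩpos.ne')
  have hz0 : z ≠ 0 := him_ne _ (by simp [hz_def]; exact hΩpos.ne')
  have hw0 : w ≠ 0 := him_ne _ (by simp [hw_def]; exact hΩpos.ne')
  have hzz : z + z ≠ 0 := by
    intro h
    exact hz0 (by linear_combination h/2)
  have hww : w + w ≠ 0 := by
    intro h
    exact hw0 (by linear_combination h/2)
  have hsum : z + w = -(γ:ℂ) := by rw [hz_def, hw_def]; push_cast; ring
  have hzw : z + w ≠ 0 := by
    rw [hsum]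
    simp [hγ.ne']
  have hwz : w + z ≠ 0 := by rw [add_comm]; exact hzw
  have hprod : z * w = (lamα:ℂ) * (γ:ℂ) := by
    have h1 : z * w = ((((γ/2)^2 + (Ωα/2)^2) : ℝ) : ℂ) := by
      rw [hz_def, hw_def]
      push_cast
      linear_combination (-((Ωα:ℂ)/2)^2) * Complex.I_sq
    have h2 : (γ/2)^2 + (Ωα/2)^2 = lamα*γ := by nlinarith [hΩ2]
    rw [h1, h2]
    push_cast
    ring
  have hC2 : Cc^2 = -(((γ/Ωα : ℝ)):ℂ)^2 := by
    rw [hC_def]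
    linear_combination ((((γ/Ωα : ℝ)):ℂ)^2) * Complex.I_sq
  -- real part facts
  have hre_zz : (z+z).re < 0 := by
    simp [hz_def]
    try linarith
  have hre_zw : (z+w).re < 0 := by
    rw [hsum]
    simp [hγ]
  have hre_ww : (w+w).re < 0 := by
    simp [hw_def]
    try linarith
  have hre_za : (z-(a:ℂ)).re < 0 := by
    simp [hz_def]
    try linarith
  have hre_wa : (w-(a:ℂ)).re < 0 := by
    simp [hw_def]
    try linarith
  -- derivative of g
  have hre_wz : (w+z).re < 0 := by rw [add_comm]; exact hre_zw
  have hgfun : gα = fun t => 2*γ/Ωα * Real.exp (-γ*t/2) * Real.sin (Ωα*t/2) := funext hg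
  have hderiv : ∀ t : ℝ, deriv gα t = 2*γ/Ωα * (Real.exp (-γ*t/2) * (-γ/2)) * Real.sin (Ωα*t/2)
      + 2*γ/Ωα * Real.exp (-γ*t/2) * (Real.cos (Ωα*t/2) * (Ωα/2)) := by
    intro t
    have h1 : HasDerivAt (fun s : ℝ => -γ*s/2) (-γ/2) t := by
      simpa using ((hasDerivAt_id t).const_mul (-γ)).div_const 2
    have h3 : HasDerivAt (fun s : ℝ => Ωα*s/2) (Ωα/2) t := by
      simpa using ((hasDerivAt_id t).const_mul Ωα).div_const 2
    have h5 := (h1.exp.const_mul (2*γ/Ωα)).mul h3.sin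
    rw [hgfun]
    exact h5.deriv
  have hgC : ∀ t : ℝ, ((deriv gα t : ℝ) : ℂ)
      = Cc * (z * Complex.exp (z*t) - w * Complex.exp (w*t)) := by
    intro t
    have hz_t : z * (t:ℂ) = ↑(-γ*t/2) + ↑(Ωα*t/2)*Complex.I := by
      rw [hz_def]; push_cast; ring
    have hw_t : w * (t:ℂ) = ↑(-γ*t/2) + ↑(-(Ωα*t/2))*Complex.I := by
      rw [hw_def]; push_cast; ring
    rw [hderiv t, hz_t, hw_t, Complex.exp_add, Complex.exp_add,
      Complex.exp_mul_I, Complex.exp_mul_I,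
      ← Complex.ofReal_exp, ← Complex.ofReal_cos, ← Complex.ofReal_sin,
      ← Complex.ofReal_cos, ← Complex.ofReal_sin, Real.cos_neg, Real.sin_neg,
      hC_def, hz_def, hw_def]
    rw [Complex.ext_iff]
    constructor
    · push_cast
      simp
      ring
    · push_cast
      simp
      ring
  -- continuity helpers
  have hcE : ∀ c : ℂ, Continuous (fun x : ℝ => Complex.exp (c * x)) :=
    fun c => Complex.continuous_exp.comp (continuous_const.mul Complex.continuous_ofReal)
  have hcA : ∀ (c : ℂ) (u : ℝ),
      Continuous (fun v : ℝ => Complex.exp (c*v) * Complex.exp (-(a:ℂ)*|u-v|)) := by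
    intro c u
    apply (hcE c).mul
    exact Complex.continuous_exp.comp
      (continuous_const.mul (Complex.continuous_ofReal.comp
        ((continuous_const.sub continuous_id).abs)))
  -- substitution step
  have hswap : ∀ t : ℝ, (∫ s in (0:ℝ)..t, ∫ s' in (0:ℝ)..t,
        deriv gα (t-s) * deriv gα (t-s') * Real.exp (-|s-s'|/τ₀))
      = ∫ u in (0:ℝ)..t, ∫ v in (0:ℝ)..t,
        deriv gα u * deriv gα v * Real.exp (-|u - v|/τ₀) := by
    intro t
    have hinner : ∀ s : ℝ, (∫ s' in (0:ℝ)..t,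
          deriv gα (t-s) * deriv gα (t-s') * Real.exp (-|s-s'|/τ₀))
        = ∫ v in (0:ℝ)..t, deriv gα (t-s) * deriv gα v * Real.exp (-|(t-s)-v|/τ₀) := by
      intro s
      have h := intervalIntegral.integral_comp_sub_left (a := 0) (b := t)
        (fun v => deriv gα (t-s) * deriv gα v * Real.exp (-|(t-s)-v|/τ₀)) t
      simp only [sub_self, sub_zero] at h
      rw [← h]
      apply intervalIntegral.integral_congr
      intro s' _
      have harg : (t-s) - (t-s') = s' - s := by ring
      simp only [harg, abs_sub_comm s' s]
    rw [intervalIntegral.integral_congr (fun s _ => hinner s)]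
    have h := intervalIntegral.integral_comp_sub_left (a := 0) (b := t)
      (fun u => ∫ v in (0:ℝ)..t, deriv gα u * deriv gα v * Real.exp (-|u-v|/τ₀)) t
    simp only [sub_self, sub_zero] at h
    exact h
  -- the exp cast helper
  have hexp : ∀ x : ℝ, ((Real.exp (-x/τ₀) : ℝ) : ℂ) = Complex.exp (-(a:ℂ) * x) := by
    intro x
    rw [Complex.ofReal_exp]
    congr 1
    rw [ha_def]
    push_cast
    ring
  -- closed form of the double integral
  have hout : ∀ (t u : ℝ), 0 ≤ u → u ≤ t →
      ((∫ v in (0:ℝ)..t, deriv gα u * deriv gα v * Real.exp (-|u-v|/τ₀) : ℝ) : ℂ)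
      = (Cc^2*(z*z)) * (Complex.exp (z*u) * Inn a z t u)
        - (Cc^2*(z*w)) * (Complex.exp (z*u) * Inn a w t u)
        - (Cc^2*(w*z)) * (Complex.exp (w*u) * Inn a z t u)
        + (Cc^2*(w*w)) * (Complex.exp (w*u) * Inn a w t u) := by
    intro t u hu0 hut
    rw [← intervalIntegral.integral_ofReal]
    have heq : Set.EqOn
        (fun v : ℝ => ((deriv gα u * deriv gα v * Real.exp (-|u-v|/τ₀) : ℝ) : ℂ))
        (fun v : ℝ =>
          (((deriv gα u : ℝ):ℂ) * Cc * z) * (Complex.exp (z*v) * Complex.exp (-(a:ℂ)*|u-v|))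
          - (((deriv gα u : ℝ):ℂ) * Cc * w) * (Complex.exp (w*v) * Complex.exp (-(a:ℂ)*|u-v|)))
        (Set.uIcc 0 t) := by
      intro v _
      simp only
      rw [Complex.ofReal_mul, Complex.ofReal_mul, hgC v, hexp |u-v|]
      ring
    rw [intervalIntegral.integral_congr heq]
    rw [intervalIntegral.integral_sub
      (f := fun v => ((deriv gα u : ℝ):ℂ) * Cc * z * (Complex.exp (z*v) * Complex.exp (-(a:ℂ)*|u-v|)))
      (g := fun v => ((deriv gα u : ℝ):ℂ) * Cc * w * (Complex.exp (w*v) * Complex.exp (-(a:ℂ)*|u-v|)))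
      ((continuous_const.mul (hcA z u)).intervalIntegrable 0 t)
      ((continuous_const.mul (hcA w u)).intervalIntegrable 0 t),
      intervalIntegral.integral_const_mul, intervalIntegral.integral_const_mul,
      inner_integral a z hza1 hza2 hu0 hut, inner_integral a w hwa1 hwa2 hu0 hut]
    rw [hgC u]
    ring
  have hJKc : ∀ t : ℝ, 0 ≤ t →
      (((∫ s in (0:ℝ)..t, ∫ s' in (0:ℝ)..t,
        deriv gα (t-s) * deriv gα (t-s') * Real.exp (-|s-s'|/τ₀) : ℝ)) : ℂ)
      = Cc^2 * (z^2 * Phi a z z t - z*w * Phi a z w t - w*z * Phi a w z t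
          + w^2 * Phi a w w t) := by
    intro t ht
    rw [hswap t, ← intervalIntegral.integral_ofReal]
    have heq : Set.EqOn
        (fun u : ℝ => ((∫ v in (0:ℝ)..t,
            deriv gα u * deriv gα v * Real.exp (-|u-v|/τ₀) : ℝ) : ℂ))
        (fun u : ℝ =>
          (Cc^2*(z*z)) * (Complex.exp (z*u) * Inn a z t u)
          - (Cc^2*(z*w)) * (Complex.exp (z*u) * Inn a w t u)
          - (Cc^2*(w*z)) * (Complex.exp (w*u) * Inn a z t u)
          + (Cc^2*(w*w)) * (Complex.exp (w*u) * Inn a w t u)) (Set.uIcc 0 t) := by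
      intro u hu
      rw [Set.uIcc_of_le ht] at hu
      exact hout t u hu.1 hu.2
    rw [intervalIntegral.integral_congr heq]
    have hInt : ∀ (p q : ℂ), IntervalIntegrable
        (fun u : ℝ => (Cc^2*(p*q)) * (Complex.exp (p*u) * Inn a q t u)) volume 0 t :=
      fun p q => (continuous_const.mul ((hcE p).mul (Inn_continuous a q t))).intervalIntegrable 0 t
    rw [intervalIntegral.integral_add (((hInt z z).sub (hInt z w)).sub (hInt w z)) (hInt w w),
      intervalIntegral.integral_sub ((hInt z z).sub (hInt z w)) (hInt w z),
      intervalIntegral.integral_sub (hInt z z) (hInt z w),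
      intervalIntegral.integral_const_mul, intervalIntegral.integral_const_mul,
      intervalIntegral.integral_const_mul, intervalIntegral.integral_const_mul,
      outer_integral a z z hza1 hza2 hzz hza1 hza2 t,
      outer_integral a z w hwa1 hwa2 hzw hza1 hza2 t,
      outer_integral a w z hza1 hza2 hwz hwa1 hwa2 t,
      outer_integral a w w hwa1 hwa2 hww hwa1 hwa2 t]
    ring
  -- limit of the closed form
  set c₀ : ℝ := 1 / (lamα*τ₀ + 1 + γ⁻¹*τ₀⁻¹) with hc₀_def
  have hKc_tendsto : Tendsto (fun t : ℝ => Cc^2 * (z^2 * Phi a z z t - z*w * Phi a z w t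
      - w*z * Phi a w z t + w^2 * Phi a w w t)) atTop
      (nhds (Cc^2 * (z^2 * Lam a z z - z*w * Lam a z w - w*z * Lam a w z
          + w^2 * Lam a w w))) := by
    exact (((((Phi_tendsto a z z hre_zz hre_za hre_za).const_mul (z^2)).sub
      ((Phi_tendsto a z w hre_zw hre_za hre_wa).const_mul (z*w))).sub
      ((Phi_tendsto a w z hre_wz hre_wa hre_za).const_mul (w*z))).add
      ((Phi_tendsto a w w hre_ww hre_wa hre_wa).const_mul (w^2))).const_mul (Cc^2)
  -- the value of the limit
  have hLam_simp : ∀ p q : ℂ, p + q ≠ 0 → q + (a:ℂ) ≠ 0 → q - (a:ℂ) ≠ 0 → p - (a:ℂ) ≠ 0 →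
      Lam a p q = (p+q-2*(a:ℂ))/(p+q)/(p-(a:ℂ))/(q-(a:ℂ)) := by
    intro p q h1 h2 h3 h4
    unfold Lam
    field_simp
    ring
  have hs1 : z^2 * Lam a z z = z/(z-(a:ℂ)) := by
    rw [hLam_simp z z hzz hza1 hza2 hza2]
    field_simp
    ring
  have hs2 : w^2 * Lam a w w = w/(w-(a:ℂ)) := by
    rw [hLam_simp w w hww hwa1 hwa2 hwa2]
    field_simp
    ring
  have hs3 : z*w * Lam a z w + w*z * Lam a w z
      = 2*(z*w)*(z+w-2*(a:ℂ))/(z+w)/(z-(a:ℂ))/(w-(a:ℂ)) := by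
    rw [hLam_simp z w hzw hwa1 hwa2 hza2, hLam_simp w z hwz hza1 hza2 hwa2]
    ring
  have hs4 : z/(z-(a:ℂ)) + w/(w-(a:ℂ)) - 2*(z*w)*(z+w-2*(a:ℂ))/(z+w)/(z-(a:ℂ))/(w-(a:ℂ))
      = (a:ℂ)*(4*(z*w) - (z+w)^2)/(z+w)/(z-(a:ℂ))/(w-(a:ℂ)) := by
    field_simp
    ring
  have hcomb : z^2 * Lam a z z - z*w * Lam a z w - w*z * Lam a w z + w^2 * Lam a w w
      = (a:ℂ)*(4*(z*w) - (z+w)^2)/(z+w)/(z-(a:ℂ))/(w-(a:ℂ)) := by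
    rw [← hs4]
    linear_combination hs1 + hs2 - hs3
  have hDen : (-(γ:ℂ)) * ((z-(a:ℂ))*(w-(a:ℂ))) = ((-γ*(lamα*γ+a*γ+a^2) : ℝ) : ℂ) := by
    push_cast
    linear_combination (-(γ:ℂ))*hprod + ((γ:ℂ)*(a:ℂ))*hsum
  have hLval : Cc^2 * (z^2 * Lam a z z - z*w * Lam a z w - w*z * Lam a w z
      + w^2 * Lam a w w) = ((c₀ : ℝ) : ℂ) := by
    rw [hcomb, div_div, div_div, hC2]
    rw [show (z+w) * ((z-(a:ℂ))*(w-(a:ℂ))) = ((-γ*(lamα*γ+a*γ+a^2) : ℝ) : ℂ) by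
      rw [← hDen, hsum]; try ring]
    rw [hprod, hsum]
    have hreal : -((γ/Ωα)^2) * (a*(4*(lamα*γ) - (-γ)^2)/(-γ*(lamα*γ+a*γ+a^2))) = c₀ := by
      have hlam0 : 0 < lamα := lt_trans (by positivity) hlam
      have hden1 : 0 < lamα*γ+a*γ+a^2 :=
        add_pos (add_pos (mul_pos hlam0 hγ) (mul_pos ha hγ)) (pow_pos ha 2)
      have hden2 : 0 < lamα*τ₀ + 1 + γ⁻¹*τ₀⁻¹ := by positivity
      have h4 : (γ/Ωα)^2 = γ^2/(4*lamα*γ-γ^2) := by rw [div_pow, hΩ2]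
      have h6 : lamα * 4 - γ ≠ 0 := (by linarith : (0:ℝ) < lamα * 4 - γ).ne'
      rw [hc₀_def, h4, ha_def]
      field_simp
      ring_nf
      rw [show lamα * (lamα * 4 - γ)⁻¹ * 4 - γ * (lamα * 4 - γ)⁻¹
          = (lamα * 4 - γ) * (lamα * 4 - γ)⁻¹ by ring]
      exact mul_inv_cancel₀ h6
    rw [← hreal]
    push_cast
    ring
  -- assemble
  have hf_cont : Continuous (fun t : ℝ => (Cc^2 * (z^2 * Phi a z z t - z*w * Phi a z w t
      - w*z * Phi a w z t + w^2 * Phi a w w t)).re) := by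
    apply Complex.continuous_re.comp
    apply continuous_const.mul
    exact (((continuous_const.mul (Phi_continuous a z z)).sub
      (continuous_const.mul (Phi_continuous a z w))).sub
      (continuous_const.mul (Phi_continuous a w z))).add
      (continuous_const.mul (Phi_continuous a w w))
  have hf_tendsto : Tendsto (fun t : ℝ => (Cc^2 * (z^2 * Phi a z z t - z*w * Phi a z w t
      - w*z * Phi a w z t + w^2 * Phi a w w t)).re) atTop (nhds c₀) := by
    have := (Complex.continuous_re.tendsto _).comp hKc_tendsto
    rw [hLval] at this
    simpa only [Complex.ofReal_re, Function.comp_def] using this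
  have havg := tendsto_average (fun T => hf_cont.intervalIntegrable 0 T) hf_tendsto
  apply havg.congr'
  filter_upwards [eventually_ge_atTop (0:ℝ)] with T hT
  congr 1
  apply intervalIntegral.integral_congr
  intro t ht
  rw [Set.uIcc_of_le hT] at ht
  have h2 := hJKc t ht.1
  simp only
  rw [← h2]
  simp


end AvgEffort

/-- deterministic content of Proposition 2, Eq. (8).
For modes `α ∈ {2,…,n}` with underdamped eigenvalues `λ_α > γ/4`, Green's
functions `g_α`, and per-mode forcing variances `σ_α² ≥ 0`, the time-averaged
noise-averaged primary control effort converges: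
`lim_{T→∞} T⁻¹ Σ_α σ_α² ∫₀ᵀ (∫₀ᵗ∫₀ᵗ ġ_α(t−s) ġ_α(t−s′) e^{−|s−s′|/τ₀} ds ds′) dt
  = Σ_α σ_α² / (λ_α τ₀ + 1 + γ⁻¹ τ₀⁻¹)`. -/
theorem averaged_primary_control_effort
    (n : ℕ) (hn : 2 ≤ n) (γ τ₀ : ℝ) (hγ : 0 < γ) (hτ₀ : 0 < τ₀)
    (lam σsq : ℕ → ℝ)
    (hlam : ∀ α ∈ Finset.Icc 2 n, γ / 4 < lam α)
    (hσsq : ∀ α ∈ Finset.Icc 2 n, 0 ≤ σsq α)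
    (Ω : ℕ → ℝ) (hΩ : ∀ α ∈ Finset.Icc 2 n, Ω α = Real.sqrt (4 * lam α * γ - γ ^ 2))
    (g : ℕ → ℝ → ℝ)
    (hg : ∀ α ∈ Finset.Icc 2 n, ∀ t : ℝ,
      g α t = (2 * γ / Ω α) * Real.exp (-γ * t / 2) * Real.sin (Ω α * t / 2)) :
    Tendsto
      (fun T : ℝ => T⁻¹ * ∑ α ∈ Finset.Icc 2 n, σsq α *
        ∫ t in (0 : ℝ)..T, ∫ s in (0 : ℝ)..t, ∫ s' in (0 : ℝ)..t,
          deriv (g α) (t - s) * deriv (g α) (t - s') * Real.exp (-|s - s'| / τ₀))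
      atTop
      (nhds (∑ α ∈ Finset.Icc 2 n, σsq α / (lam α * τ₀ + 1 + γ⁻¹ * τ₀⁻¹))) := by
  have hmode : ∀ α ∈ Finset.Icc 2 n,
      Tendsto (fun T : ℝ => σsq α * (T⁻¹ * ∫ t in (0:ℝ)..T, ∫ s in (0:ℝ)..t, ∫ s' in (0:ℝ)..t,
          deriv (g α) (t-s) * deriv (g α) (t-s') * Real.exp (-|s-s'|/τ₀))) atTop
        (nhds (σsq α * (1 / (lam α * τ₀ + 1 + γ⁻¹ * τ₀⁻¹)))) := by
    intro α hα
    exact (AvgEffort.mode_limit γ τ₀ (lam α) (Ω α) hγ hτ₀ (hlam α hα) (by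
        rw [hΩ α hα]) (g α) (fun t => by rw [hg α hα t])).const_mul _
  have hsum := tendsto_finset_sum (Finset.Icc 2 n) hmode
  have hfun : (fun T : ℝ => T⁻¹ * ∑ α ∈ Finset.Icc 2 n, σsq α *
        ∫ t in (0 : ℝ)..T, ∫ s in (0 : ℝ)..t, ∫ s' in (0 : ℝ)..t,
          deriv (g α) (t - s) * deriv (g α) (t - s') * Real.exp (-|s - s'| / τ₀))
      = (fun T : ℝ => ∑ α ∈ Finset.Icc 2 n, σsq α * (T⁻¹ * ∫ t in (0:ℝ)..T,
          ∫ s in (0:ℝ)..t, ∫ s' in (0:ℝ)..t,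
          deriv (g α) (t-s) * deriv (g α) (t-s') * Real.exp (-|s-s'|/τ₀))) := by
    funext T
    rw [Finset.mul_sum]
    exact Finset.sum_congr rfl fun α _ => by ring
  rw [hfun]
  have hval : (∑ α ∈ Finset.Icc 2 n, σsq α / (lam α * τ₀ + 1 + γ⁻¹ * τ₀⁻¹))
      = ∑ α ∈ Finset.Icc 2 n, σsq α * (1 / (lam α * τ₀ + 1 + γ⁻¹ * τ₀⁻¹)) := by
    exact Finset.sum_congr rfl fun α _ => by rw [mul_one_div]
  rw [hval]
  exact hsum
end

section
/- Let n ≥ 2, γ > 0, d₁,…,dₙ > 0, p₁,…,pₙ ≥ 0, let u₁,…,uₙ be an orthonormal basis of ℝⁿ with u₁ = D^{1/2}𝟙/√(Σᵢ dᵢ) where D = diag(dᵢ), and let λ₂,…,λₙ ∈ ℝ. For τ₀ > 0 define F(τ₀) = Σ_{α=2}^{n} (Σᵢ pᵢ (u_{α,i})² / dᵢ) / (λ_α τ₀ + 1 + γ⁻¹ τ₀⁻¹). Then lim_{τ₀→0⁺} F(τ₀)/τ₀ = Σᵢ pᵢ (1/mᵢ − 1/Σⱼ mⱼ), where mᵢ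 = dᵢ/γ. -/
/-!
Since `λ τ₀ + 1 + γ⁻¹ τ₀⁻¹ = (λ τ₀² + τ₀ + γ⁻¹) / τ₀`, each mode contributes
`c_α / (λ_α τ₀² + τ₀ + γ⁻¹) → γ c_α` to `F(τ₀)/τ₀`, whatever its eigenvalue. Summing the weights
`c_α = Σᵢ pᵢ u_{α,i}² / dᵢ` over the non-zero modes uses the completeness of the orthonormal basis,
`Σ_{α ≠ 0} u_{α,i}² = 1 - u_{0,i}² = 1 - dᵢ / Σⱼ dⱼ`.
-/

open Filter Topology Finset

section Orthonormal

variable {ι : Type*} [Fintype ι] [DecidableEq ι] {u : ι → ι → ℝ}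

theorem sum_sq_apply_eq_one_of_orthonormal
    (hu : ∀ α β, ∑ i, u α i * u β i = if α = β then 1 else 0) (i : ι) :
    ∑ α, u α i ^ 2 = 1 := by
  have hrows : Matrix.of u * (Matrix.of u).transpose = 1 := by
    ext α β
    simpa [Matrix.mul_apply, Matrix.one_apply] using hu α β
  have hcols : (Matrix.of u).transpose * Matrix.of u = 1 := mul_eq_one_comm.mp hrows
  simpa [Matrix.mul_apply, sq] using congrFun (congrFun hcols i) i

theorem sum_erase_sum_mul_sq_eq_of_orthonormal
    (hu : ∀ α β, ∑ i, u α i * u β i = if α = β then 1 else 0) (w : ι → ℝ) (a : ι) :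
    ∑ α ∈ univ.erase a, ∑ i, w i * u α i ^ 2 = ∑ i, w i * (1 - u a i ^ 2) := by
  rw [sum_comm]
  refine sum_congr rfl fun i _ => ?_
  rw [← mul_sum, sum_erase_eq_sub (mem_univ a), sum_sq_apply_eq_one_of_orthonormal hu]

end Orthonormal

theorem tendsto_div_mul_add_one_add_inv_mul_inv_div {γ : ℝ} (hγ : γ ≠ 0) (c l : ℝ) :
    Tendsto (fun τ : ℝ => c / (l * τ + 1 + γ⁻¹ * τ⁻¹) / τ) (𝓝[≠] 0) (𝓝 (γ * c)) := by
  have hcont : Tendsto (fun τ : ℝ => c / (l * τ ^ 2 + τ + γ⁻¹)) (𝓝 0) (𝓝 (c / γ⁻¹)) :=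
    (tendsto_const_nhds.div (Continuous.tendsto (by fun_prop) 0) (by simpa using hγ)).trans
      (by simp)
  rw [show γ * c = c / γ⁻¹ by field_simp]
  refine (hcont.mono_left nhdsWithin_le_nhds).congr' ?_
  filter_upwards [self_mem_nhdsWithin] with τ (hτ : τ ≠ 0)
  rw [div_div]
  congr 1
  field_simp

theorem tendsto_sum_div_mul_add_one_add_inv_mul_inv_div {ι : Type*} {γ : ℝ} (hγ : γ ≠ 0)
    (s : Finset ι) (c l : ι → ℝ) :
    Tendsto (fun τ : ℝ => (∑ α ∈ s, c α / (l α * τ + 1 + γ⁻¹ * τ⁻¹)) / τ) (𝓝[≠] 0)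
      (𝓝 (γ * ∑ α ∈ s, c α)) := by
  simp only [sum_div, mul_sum]
  exact tendsto_finsetSum s fun α _ => tendsto_div_mul_add_one_add_inv_mul_inv_div hγ (c α) (l α)

theorem short_correlation_time_asymptotic_general
    (n : ℕ) [NeZero n] (γ : ℝ) (hγ : 0 < γ)
    (d p : Fin n → ℝ) (hd : ∀ i, 0 < d i)
    (u : Fin n → Fin n → ℝ)
    (horth : ∀ α β, (∑ i, u α i * u β i) = if α = β then (1 : ℝ) else 0)
    (hu0 : ∀ i, u 0 i = Real.sqrt (d i) / Real.sqrt (∑ j, d j))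
    (lam : Fin n → ℝ)
    (F : ℝ → ℝ)
    (hF : ∀ τ₀ : ℝ, F τ₀ = ∑ α ∈ Finset.univ.erase 0,
      (∑ i, p i * (u α i) ^ 2 / d i) / (lam α * τ₀ + 1 + γ⁻¹ * τ₀⁻¹))
    (m : Fin n → ℝ) (hm : ∀ i, m i = d i / γ) :
    Tendsto (fun τ₀ : ℝ => F τ₀ / τ₀) (nhdsWithin 0 (Set.Ioi 0))
      (nhds (∑ i, p i * (1 / m i - 1 / ∑ j, m j))) := by
  have hS : 0 < ∑ j, d j := sum_pos (fun j _ => hd j) univ_nonempty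
  have hu0_sq (i : Fin n) : u 0 i ^ 2 = d i / ∑ j, d j := by
    rw [hu0, div_pow, Real.sq_sqrt (hd i).le, Real.sq_sqrt hS.le]
  have hm_sum : ∑ j, m j = (∑ j, d j) / γ := by simp only [hm, sum_div]
  have hlimit : γ * ∑ α ∈ univ.erase 0, ∑ i, p i * u α i ^ 2 / d i
      = ∑ i, p i * (1 / m i - 1 / ∑ j, m j) := by
    simp only [mul_div_right_comm (p _)]
    rw [sum_erase_sum_mul_sq_eq_of_orthonormal horth, mul_sum]
    refine sum_congr rfl fun i _ => ?_
    rw [hu0_sq, hm, hm_sum]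
    field_simp [(hd i).ne', hS.ne']
  simp only [hF]
  rw [← hlimit]
  exact (tendsto_sum_div_mul_add_one_add_inv_mul_inv_div hγ.ne' _ _ lam).mono_left
    (nhdsWithin_mono _ fun τ (hτ : 0 < τ) => hτ.ne')

/-- Corollary 1, Eq. (9): short-correlation-time asymptotic.
With damping `d i > 0`, noise intensities `p i ≥ 0`, orthonormal basis `u` of
ℝⁿ whose first vector is the zero mode `u 0 = D^{1/2}𝟙/√(Σ d)`, eigenvalues
`λ_α`, and
`F(τ₀) = Σ_{α≠0} (Σᵢ pᵢ (u_{α,i})²/dᵢ) / (λ_α τ₀ + 1 + γ⁻¹ τ₀⁻¹)`,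
one has `lim_{τ₀→0⁺} F(τ₀)/τ₀ = Σᵢ pᵢ (1/mᵢ − 1/Σⱼ mⱼ)` with `mᵢ = dᵢ/γ`. -/
theorem short_correlation_time_asymptotic
    (n : ℕ) [NeZero n] (hn : 2 ≤ n) (γ : ℝ) (hγ : 0 < γ)
    (d p : Fin n → ℝ) (hd : ∀ i, 0 < d i) (hp : ∀ i, 0 ≤ p i)
    (u : Fin n → Fin n → ℝ)
    (horth : ∀ α β, (∑ i, u α i * u β i) = if α = β then (1 : ℝ) else 0)
    (hu0 : ∀ i, u 0 i = Real.sqrt (d i) / Real.sqrt (∑ j, d j))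
    (lam : Fin n → ℝ)
    (F : ℝ → ℝ)
    (hF : ∀ τ₀ : ℝ, F τ₀ = ∑ α ∈ Finset.univ.erase 0,
      (∑ i, p i * (u α i) ^ 2 / d i) / (lam α * τ₀ + 1 + γ⁻¹ * τ₀⁻¹))
    (m : Fin n → ℝ) (hm : ∀ i, m i = d i / γ) :
    Tendsto (fun τ₀ : ℝ => F τ₀ / τ₀) (nhdsWithin 0 (Set.Ioi 0))
      (nhds (∑ i, p i * (1 / m i - 1 / ∑ j, m j))) :=
  short_correlation_time_asymptotic_general n γ hγ d p hd u horth hu0 lam F hF m hm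
end

section
/- Let n ≥ 2, γ > 0, τ₀ > 0, and for each α ∈ {2,…,n} let λ_α > γ/4, Ω_α = √(4λ_α γ − γ²), g_α(t) = (2γ/Ω_α) e^{−γt/2} sin(Ω_α t / 2), and σ_{αβ} ∈ ℝ for α, β ∈ {2,…,n}. Define R_{αβ}(t,t′) = σ_{αβ} ∫₀ᵗ ∫₀^{t′} ġ_α(t−s) ġ_β(t′−s′) e^{−|s−s′|/τ₀} ds′ ds. Then there exists C > 0 such that for all T ≥ 1, T⁻² Σ_{α,β=2}^{n} ∫₀ᵀ ∫₀ᵀ 2 R_{αβ}(t,t′)² dt dt′ ≤ C / T. -/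
/-!
Since `γ > 0`, each `ġ_α` decays like `e^{-γu/2}`. Splitting `e^{-d|t-t'|}` off the product of the
three exponentials in the integrand via `|t - t'| ≤ (t - s) + (t' - s') + |s - s'|` gives
`|R_{αβ}(t,t')| ≤ K e^{-d|t-t'|}` with `d = min(γ/2, 1/τ₀)/2`, uniformly in `t, t' ≥ 0`.
Hence `∫₀ᵀ R_{αβ}(t,t')² dt'` is bounded uniformly in `t`, the double integral grows at most
linearly in `T`, and `T⁻²` times it is `O(1/T)`.
-/

open MeasureTheory intervalIntegral Real Set

noncomputable def dampedSine (c a b t : ℝ) : ℝ :=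
  c * exp (-(a * t)) * sin (b * t)

lemma hasDerivAt_dampedSine (c a b t : ℝ) :
    HasDerivAt (dampedSine c a b)
      (c * exp (-(a * t)) * (b * cos (b * t) - a * sin (b * t))) t := by
  have hexp : HasDerivAt (fun t => exp (-(a * t))) (exp (-(a * t)) * -a) t := by
    simpa using ((hasDerivAt_id t).const_mul a).neg.exp
  have hsin : HasDerivAt (fun t => sin (b * t)) (cos (b * t) * b) t := by
    simpa using ((hasDerivAt_id t).const_mul b).sin
  exact ((hexp.const_mul c).mul hsin).congr_deriv (by ring)

lemma deriv_dampedSine (c a b : ℝ) :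
    deriv (dampedSine c a b)
      = fun t => c * exp (-(a * t)) * (b * cos (b * t) - a * sin (b * t)) :=
  funext fun t => (hasDerivAt_dampedSine c a b t).deriv

lemma continuous_deriv_dampedSine (c a b : ℝ) : Continuous (deriv (dampedSine c a b)) := by
  rw [deriv_dampedSine]
  fun_prop

lemma abs_deriv_dampedSine_le (c a b u : ℝ) :
    |deriv (dampedSine c a b) u| ≤ |c| * (|a| + |b|) * exp (-(a * u)) := by
  have hosc : |b * cos (b * u) - a * sin (b * u)| ≤ |a| + |b| :=
    calc |b * cos (b * u) - a * sin (b * u)|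
        ≤ |b| * |cos (b * u)| + |a| * |sin (b * u)| := by
          rw [← abs_mul, ← abs_mul]; exact abs_sub _ _
      _ ≤ |a| + |b| := by
          nlinarith [abs_cos_le_one (b * u), abs_sin_le_one (b * u), abs_nonneg a, abs_nonneg b]
  rw [deriv_dampedSine, abs_mul, abs_mul, abs_of_pos (exp_pos _)]
  calc |c| * exp (-(a * u)) * |b * cos (b * u) - a * sin (b * u)|
      ≤ |c| * exp (-(a * u)) * (|a| + |b|) := by gcongr
    _ = |c| * (|a| + |b|) * exp (-(a * u)) := by ring

lemma integral_exp_neg_mul_sub_le {c : ℝ} (hc : 0 < c) (a b : ℝ) :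
    ∫ s in a..b, exp (-(c * (b - s))) ≤ c⁻¹ := by
  have hderiv : ∀ s ∈ uIcc a b,
      HasDerivAt (fun s => c⁻¹ * exp (-(c * (b - s)))) (exp (-(c * (b - s)))) s := by
    intro s _
    have hlin : HasDerivAt (fun s => -(c * (b - s))) c s := by
      simpa using (((hasDerivAt_id' s).const_sub b).const_mul c).fun_neg
    exact (hlin.exp.const_mul c⁻¹).congr_deriv (by field_simp)
  have hcont : Continuous fun s => exp (-(c * (b - s))) := by fun_prop
  rw [integral_eq_sub_of_hasDerivAt hderiv (hcont.intervalIntegrable _ _)]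
  simp only [sub_self, mul_zero, neg_zero, exp_zero, mul_one]
  exact sub_le_self _ (by positivity)

lemma integral_exp_neg_mul_sub_le' {c : ℝ} (hc : 0 < c) (a b : ℝ) :
    ∫ s in a..b, exp (-(c * (s - a))) ≤ c⁻¹ := by
  have hreflect :=
    integral_comp_sub_left (fun s => exp (-(c * (b - s)))) (a + b) (a := a) (b := b)
  simp only [add_sub_cancel_right, add_sub_cancel_left] at hreflect
  calc ∫ s in a..b, exp (-(c * (s - a))) = ∫ s in a..b, exp (-(c * (b - (a + b - s)))) := by
        congr 1; ext s; ring_nf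
    _ ≤ c⁻¹ := hreflect ▸ integral_exp_neg_mul_sub_le hc a b

lemma integral_exp_neg_mul_abs_sub_le {c T t : ℝ} (hc : 0 < c) (ht : t ∈ Icc 0 T) :
    ∫ t' in 0..T, exp (-(c * |t - t'|)) ≤ 2 * c⁻¹ := by
  have hint : ∀ a b, IntervalIntegrable (fun t' => exp (-(c * |t - t'|))) volume a b :=
    fun a b => (by fun_prop : Continuous _).intervalIntegrable a b
  rw [← integral_add_adjacent_intervals (hint 0 t) (hint t T), two_mul]
  have hleft : ∫ t' in 0..t, exp (-(c * |t - t'|)) = ∫ t' in 0..t, exp (-(c * (t - t'))) :=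
    integral_congr fun t' ht' => by
      rw [uIcc_of_le ht.1] at ht'
      simp only [abs_of_nonneg (sub_nonneg.2 ht'.2)]
  have hright : ∫ t' in t..T, exp (-(c * |t - t'|)) = ∫ t' in t..T, exp (-(c * (t' - t))) :=
    integral_congr fun t' ht' => by
      rw [uIcc_of_le ht.2] at ht'
      simp only [abs_sub_comm t, abs_of_nonneg (sub_nonneg.2 ht'.1)]
  rw [hleft, hright]
  exact add_le_add (integral_exp_neg_mul_sub_le hc 0 t) (integral_exp_neg_mul_sub_le' hc t T)

lemma abs_integral_le_of_abs_le_mul_exp {f : ℝ → ℝ} {A d t : ℝ} (hd : 0 < d) (hA : 0 ≤ A)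
    (ht : 0 ≤ t) (hf : ∀ s ∈ Ioc 0 t, |f s| ≤ A * exp (-(d * (t - s)))) :
    |∫ s in 0..t, f s| ≤ A * d⁻¹ :=
  calc |∫ s in 0..t, f s| ≤ ∫ s in 0..t, A * exp (-(d * (t - s))) := by
        rw [← Real.norm_eq_abs]
        exact norm_integral_le_of_norm_le ht (ae_of_all _ hf)
          ((by fun_prop : Continuous fun s => A * exp (-(d * (t - s)))).intervalIntegrable _ _)
    _ = A * ∫ s in 0..t, exp (-(d * (t - s))) := integral_const_mul _ _
    _ ≤ A * d⁻¹ := by gcongr; exact integral_exp_neg_mul_sub_le hd 0 t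

noncomputable def responseCovariance (G H : ℝ → ℝ) (τ₀ t t' : ℝ) : ℝ :=
  ∫ s in 0..t, ∫ s' in 0..t', G (t - s) * H (t' - s') * exp (-|s - s'| / τ₀)

lemma abs_responseCovariance_le {G H : ℝ → ℝ} {M N a τ₀ d t t' : ℝ} (hd : 0 < d)
    (hda : 2 * d ≤ a) (hdτ : 2 * d ≤ τ₀⁻¹)
    (hG : ∀ u, 0 ≤ u → |G u| ≤ M * exp (-(a * u)))
    (hH : ∀ u, 0 ≤ u → |H u| ≤ N * exp (-(a * u))) (ht : 0 ≤ t) (ht' : 0 ≤ t') :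
    |responseCovariance G H τ₀ t t'| ≤ M * N * d⁻¹ ^ 2 * exp (-(d * |t - t'|)) := by
  have hM : 0 ≤ M := by simpa using (abs_nonneg _).trans (hG 0 le_rfl)
  have hN : 0 ≤ N := by simpa using (abs_nonneg _).trans (hH 0 le_rfl)
  set E := exp (-(d * |t - t'|))
  have hexponent : ∀ s ≤ t, ∀ s' ≤ t',
      -(a * (t - s)) + -(a * (t' - s')) + -|s - s'| / τ₀
        ≤ -(d * |t - t'|) + -(d * (t - s)) + -(d * (t' - s')) := by
    intro s hs s' hs'
    have htri : |t - t'| ≤ (t - s) + (t' - s') + |s - s'| :=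
      abs_sub_le_iff.2 ⟨by linarith [le_abs_self (s - s')], by linarith [neg_abs_le (s - s')]⟩
    have := mul_le_mul_of_nonneg_left htri hd.le
    have := mul_le_mul_of_nonneg_right hda (sub_nonneg.2 hs)
    have := mul_le_mul_of_nonneg_right hda (sub_nonneg.2 hs')
    have := mul_le_mul_of_nonneg_right hdτ (abs_nonneg (s - s'))
    have := mul_nonneg hd.le (abs_nonneg (s - s'))
    rw [neg_div, div_eq_inv_mul]
    linarith
  have hpoint : ∀ s ∈ Ioc 0 t, ∀ s' ∈ Ioc 0 t',
      |G (t - s) * H (t' - s') * exp (-|s - s'| / τ₀)|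
        ≤ M * N * E * exp (-(d * (t - s))) * exp (-(d * (t' - s'))) := by
    intro s hs s' hs'
    calc |G (t - s) * H (t' - s') * exp (-|s - s'| / τ₀)|
        = |G (t - s)| * |H (t' - s')| * exp (-|s - s'| / τ₀) := by
          rw [abs_mul, abs_mul, abs_of_pos (exp_pos _)]
      _ ≤ M * exp (-(a * (t - s))) * (N * exp (-(a * (t' - s')))) * exp (-|s - s'| / τ₀) := by
          gcongr
          exacts [hG _ (sub_nonneg.2 hs.2), hH _ (sub_nonneg.2 hs'.2)]
      _ = M * N * exp (-(a * (t - s)) + -(a * (t' - s')) + -|s - s'| / τ₀) := by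
          rw [exp_add, exp_add]; ring
      _ ≤ M * N * exp (-(d * |t - t'|) + -(d * (t - s)) + -(d * (t' - s'))) := by
          gcongr M * N * exp ?_; exact hexponent s hs.2 s' hs'.2
      _ = M * N * E * exp (-(d * (t - s))) * exp (-(d * (t' - s'))) := by
          rw [exp_add, exp_add]; ring
  have hinner : ∀ s ∈ Ioc 0 t,
      |∫ s' in 0..t', G (t - s) * H (t' - s') * exp (-|s - s'| / τ₀)|
        ≤ M * N * E * d⁻¹ * exp (-(d * (t - s))) := fun s hs =>
    (abs_integral_le_of_abs_le_mul_exp hd (by positivity) ht' (hpoint s hs)).trans_eq (by ring)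
  calc |responseCovariance G H τ₀ t t'| ≤ M * N * E * d⁻¹ * d⁻¹ :=
        abs_integral_le_of_abs_le_mul_exp hd (by positivity) ht hinner
    _ = M * N * d⁻¹ ^ 2 * E := by ring

lemma continuous_responseCovariance {G H : ℝ → ℝ} (hG : Continuous G) (hH : Continuous H)
    (τ₀ : ℝ) : Continuous (Function.uncurry (responseCovariance G H τ₀)) := by
  have hinner : Continuous fun q : (ℝ × ℝ) × ℝ => ∫ s' in 0..q.1.2,
      G (q.1.1 - q.2) * H (q.1.2 - s') * exp (-|q.2 - s'| / τ₀) :=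
    continuous_parametric_intervalIntegral_of_continuous (by fun_prop)
      (continuous_snd.comp continuous_fst)
  exact continuous_parametric_intervalIntegral_of_continuous hinner continuous_fst

lemma integral_integral_sq_le {F : ℝ → ℝ → ℝ} {K c T : ℝ} (hF : Continuous (Function.uncurry F))
    (hc : 0 < c) (hT : 0 ≤ T)
    (hbound : ∀ t ∈ Icc 0 T, ∀ t' ∈ Icc 0 T, |F t t'| ≤ K * exp (-(c * |t - t'|))) :
    ∫ t in 0..T, ∫ t' in 0..T, F t t' ^ 2 ≤ K ^ 2 * c⁻¹ * T := by
  have hinner : ∀ t ∈ Icc 0 T, ∫ t' in 0..T, F t t' ^ 2 ≤ K ^ 2 * c⁻¹ := fun t ht =>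
    calc ∫ t' in 0..T, F t t' ^ 2 ≤ ∫ t' in 0..T, K ^ 2 * exp (-(2 * c * |t - t'|)) := by
          refine integral_mono_on hT ?_ ?_ fun t' ht' => ?_
          · exact ((hF.comp (Continuous.prodMk_right t)).pow 2).intervalIntegrable _ _
          · exact (by fun_prop : Continuous _).intervalIntegrable _ _
          calc F t t' ^ 2 = |F t t'| ^ 2 := (sq_abs _).symm
            _ ≤ (K * exp (-(c * |t - t'|))) ^ 2 := by gcongr; exact hbound t ht t' ht'
            _ = K ^ 2 * exp (-(2 * c * |t - t'|)) := by rw [mul_pow, ← exp_nat_mul]; ring_nf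
      _ = K ^ 2 * ∫ t' in 0..T, exp (-(2 * c * |t - t'|)) := integral_const_mul _ _
      _ ≤ K ^ 2 * (2 * (2 * c)⁻¹) := by
          gcongr; exact integral_exp_neg_mul_abs_sub_le (by positivity) ht
      _ = K ^ 2 * c⁻¹ := by field_simp
  calc ∫ t in 0..T, ∫ t' in 0..T, F t t' ^ 2 ≤ ∫ _ in 0..T, K ^ 2 * c⁻¹ := by
        refine integral_mono_on hT ?_ intervalIntegrable_const hinner
        exact (continuous_parametric_intervalIntegral_of_continuous' (hF.pow 2) 0 T
          ).intervalIntegrable _ _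
    _ = K ^ 2 * c⁻¹ * T := by rw [intervalIntegral.integral_const, smul_eq_mul, sub_zero, mul_comm]

lemma exists_integral_integral_sq_responseCovariance_le {a τ₀ : ℝ} (ha : 0 < a) (hτ₀ : 0 < τ₀)
    (c₁ b₁ c₂ b₂ : ℝ) : ∃ K, ∀ T, 0 ≤ T →
      ∫ t in 0..T, ∫ t' in 0..T,
        responseCovariance (deriv (dampedSine c₁ a b₁)) (deriv (dampedSine c₂ a b₂)) τ₀ t t' ^ 2
        ≤ K * T := by
  obtain ⟨d, hd, hda, hdτ⟩ : ∃ d : ℝ, 0 < d ∧ 2 * d ≤ a ∧ 2 * d ≤ τ₀⁻¹ :=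
    ⟨min a τ₀⁻¹ / 2, by positivity, by linarith [min_le_left a τ₀⁻¹],
      by linarith [min_le_right a τ₀⁻¹]⟩
  refine ⟨(|c₁| * (|a| + |b₁|) * (|c₂| * (|a| + |b₂|)) * d⁻¹ ^ 2) ^ 2 * d⁻¹, fun T hT => ?_⟩
  exact integral_integral_sq_le (continuous_responseCovariance
      (continuous_deriv_dampedSine ..) (continuous_deriv_dampedSine ..) τ₀) hd hT
    fun t ht t' ht' => abs_responseCovariance_le hd hda hdτ
      (fun u _ => abs_deriv_dampedSine_le ..) (fun u _ => abs_deriv_dampedSine_le ..) ht.1 ht'.1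

theorem variance_performance_metric_decay_general
    (n : ℕ) (γ τ₀ : ℝ) (hγ : 0 < γ) (hτ₀ : 0 < τ₀)
    (Ω : ℕ → ℝ)
    (g : ℕ → ℝ → ℝ)
    (hg : ∀ α ∈ Finset.Icc 2 n, ∀ t : ℝ,
      g α t = (2 * γ / Ω α) * Real.exp (-γ * t / 2) * Real.sin (Ω α * t / 2))
    (σ : ℕ → ℕ → ℝ)
    (R : ℕ → ℕ → ℝ → ℝ → ℝ)
    (hR : ∀ α ∈ Finset.Icc 2 n, ∀ β ∈ Finset.Icc 2 n, ∀ t t' : ℝ,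
      R α β t t' = σ α β * ∫ s in (0 : ℝ)..t, ∫ s' in (0 : ℝ)..t',
        deriv (g α) (t - s) * deriv (g β) (t' - s') * Real.exp (-|s - s'| / τ₀)) :
    ∃ C : ℝ, 0 < C ∧ ∀ T : ℝ, 1 ≤ T →
      T⁻¹ ^ 2 * ∑ α ∈ Finset.Icc 2 n, ∑ β ∈ Finset.Icc 2 n,
        (∫ t in (0 : ℝ)..T, ∫ t' in (0 : ℝ)..T, 2 * (R α β t t') ^ 2)
      ≤ C / T := by
  set S := Finset.Icc 2 n
  have hgS : ∀ α ∈ S, g α = dampedSine (2 * γ / Ω α) (γ / 2) (Ω α / 2) := fun α hα =>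
    funext fun t => by rw [hg α hα t, dampedSine]; ring_nf
  have hpair : ∀ α ∈ S, ∀ β ∈ S, ∃ K, ∀ T, 0 ≤ T →
      ∫ t in 0..T, ∫ t' in 0..T, 2 * R α β t t' ^ 2 ≤ K * T := by
    intro α hα β hβ
    obtain ⟨K, hK⟩ := exists_integral_integral_sq_responseCovariance_le (half_pos hγ) hτ₀
      (2 * γ / Ω α) (Ω α / 2) (2 * γ / Ω β) (Ω β / 2)
    refine ⟨2 * σ α β ^ 2 * K, fun T hT => ?_⟩
    have hRS : ∀ t t', R α β t t' = σ α β * responseCovariance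
        (deriv (dampedSine (2 * γ / Ω α) (γ / 2) (Ω α / 2)))
        (deriv (dampedSine (2 * γ / Ω β) (γ / 2) (Ω β / 2))) τ₀ t t' := fun t t' => by
      rw [hR α hα β hβ, hgS α hα, hgS β hβ, responseCovariance]
    simp only [hRS, mul_pow, intervalIntegral.integral_const_mul]
    calc 2 * (σ α β ^ 2 * _) ≤ 2 * (σ α β ^ 2 * (K * T)) := by gcongr; exact hK T hT
      _ = 2 * σ α β ^ 2 * K * T := by ring
  choose! K hK using hpair
  set Q := ∑ α ∈ S, ∑ β ∈ S, K α β
  refine ⟨|Q| + 1, by positivity, fun T hT => ?_⟩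
  have hT0 : 0 < T := by linarith
  calc T⁻¹ ^ 2 * ∑ α ∈ S, ∑ β ∈ S, ∫ t in 0..T, ∫ t' in 0..T, 2 * R α β t t' ^ 2
      ≤ T⁻¹ ^ 2 * (Q * T) := by
        simp only [Q, Finset.sum_mul]
        gcongr with α hα β hβ
        exact hK α hα β hβ T hT0.le
    _ = Q / T := by field_simp
    _ ≤ (|Q| + 1) / T := by gcongr; linarith [le_abs_self Q]

/-- deterministic content of Proposition 3: `var[𝒫(T)] = O(1/T)`.
For underdamped modes `α ∈ {2,…,n}` (`λ_α > γ/4`) with Green's functions `g_α`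
and cross-covariance kernels
`R_{αβ}(t,t′) = σ_{αβ} ∫₀ᵗ∫₀^{t′} ġ_α(t−s) ġ_β(t′−s′) e^{−|s−s′|/τ₀} ds′ ds`,
there exists `C > 0` such that for all `T ≥ 1`,
`T⁻² Σ_{α,β} ∫₀ᵀ∫₀ᵀ 2 R_{αβ}(t,t′)² dt dt′ ≤ C/T`. -/
theorem variance_performance_metric_decay
    (n : ℕ) (hn : 2 ≤ n) (γ τ₀ : ℝ) (hγ : 0 < γ) (hτ₀ : 0 < τ₀)
    (lam : ℕ → ℝ) (hlam : ∀ α ∈ Finset.Icc 2 n, γ / 4 < lam α)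
    (Ω : ℕ → ℝ) (hΩ : ∀ α ∈ Finset.Icc 2 n, Ω α = Real.sqrt (4 * lam α * γ - γ ^ 2))
    (g : ℕ → ℝ → ℝ)
    (hg : ∀ α ∈ Finset.Icc 2 n, ∀ t : ℝ,
      g α t = (2 * γ / Ω α) * Real.exp (-γ * t / 2) * Real.sin (Ω α * t / 2))
    (σ : ℕ → ℕ → ℝ)
    (R : ℕ → ℕ → ℝ → ℝ → ℝ)
    (hR : ∀ α ∈ Finset.Icc 2 n, ∀ β ∈ Finset.Icc 2 n, ∀ t t' : ℝ,
      R α β t t' = σ α β * ∫ s in (0 : ℝ)..t, ∫ s' in (0 : ℝ)..t',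
        deriv (g α) (t - s) * deriv (g β) (t' - s') * Real.exp (-|s - s'| / τ₀)) :
    ∃ C : ℝ, 0 < C ∧ ∀ T : ℝ, 1 ≤ T →
      T⁻¹ ^ 2 * ∑ α ∈ Finset.Icc 2 n, ∑ β ∈ Finset.Icc 2 n,
        (∫ t in (0 : ℝ)..T, ∫ t' in (0 : ℝ)..T, 2 * (R α β t t') ^ 2)
      ≤ C / T :=
  variance_performance_metric_decay_general n γ τ₀ hγ hτ₀ Ω g hg σ R hR
end
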